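/- Let G be a connected circle graph and β a chordal solution to its Naji system. Then, up to equivalence, there is a unique oriented chord diagram 𝒞 for G with β_𝒞 = β; that is, any two oriented chord diagrams representing G whose induced Naji solutions both equal β have the same cyclic encoding (the clockwise cyclic sequence of labelled chord-ends, each end marked head or tail, is the same up to rotation). -/

import Mathlib

/-- Cyclic betweenness on `Fin m`: `k` lies strictly inside the clockwise arc
from `p` to `q`. -/
def cycBtw {m : ℕ} (p k q : Fin m) : Prop :=
  if p < q then p < k ∧ k < q else p < k ∨ k < q

/-- An oriented chord diagram for `G`: a cyclic double occurrence word on the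
vertex set (each vertex appears exactly twice, once marked as head and once as
tail), with two vertices adjacent iff their occurrences interleave. -/
structure OCD {V : Type*} [Fintype V] [DecidableEq V] (G : SimpleGraph V) where
  word : Fin (2 * Fintype.card V) → V
  isHead : Fin (2 * Fintype.card V) → Bool
  occ_two : ∀ v : V, (Finset.univ.filter fun i => word i = v).card = 2
  head_one : ∀ v : V, (Finset.univ.filter fun i => word i = v ∧ isHead i = true).card = 1
  adj_iff : ∀ u v : V, u ≠ v →
    (G.Adj u v ↔ ∃ i j : Fin (2 * Fintype.card V), i < j ∧ word i = u ∧ word j = u ∧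
      (Finset.univ.filter fun k => word k = v ∧ i < k ∧ k < j).card = 1)

/-- The diagram `D` realizes `β`: `β u v = 0` exactly when the head of the chord
`v` is encountered travelling clockwise from the head of `u` to the tail of `u`. -/
def OCD.Realizes {V : Type*} [Fintype V] [DecidableEq V] {G : SimpleGraph V}
    (D : OCD G) (β : V → V → ZMod 2) : Prop :=
  ∀ u v : V, u ≠ v → ∀ hu tu hv : Fin (2 * Fintype.card V),
    D.word hu = u → D.isHead hu = true → D.word tu = u → D.isHead tu = false →
    D.word hv = v → D.isHead hv = true →
    (β u v = 0 ↔ cycBtw hu hv tu)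

/-- A solution `β` is chordal if some oriented chord diagram for `G` realizes it. -/
def NajiChordal {V : Type*} [Fintype V] [DecidableEq V] (G : SimpleGraph V)
    (β : V → V → ZMod 2) : Prop :=
  ∃ D : OCD G, D.Realizes β

/-- Two oriented chord diagrams are equivalent if their clockwise cyclic
encodings (labelled chord-ends, each marked head or tail) agree up to rotation. -/
def OCD.Equiv {V : Type*} [Fintype V] [DecidableEq V] {G : SimpleGraph V}
    (D₁ D₂ : OCD G) : Prop :=
  ∃ r : Fin (2 * Fintype.card V),
    ∀ i, D₂.word (i + r) = D₁.word i ∧ D₂.isHead (i + r) = D₁.isHead i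

/-!
Read both diagrams as linear orders of chord ends starting at the head of a fixed chord `v₀`.
Then `β` and `G` determine, for every chord `w`, its orientation and which chord ends lie
strictly inside the interval `J` spanned by `w`: `β` says on which side of `w` every head lies,
the base point decides which side is `J`, and adjacency tells whether the two ends of another
chord lie on the same side. Now if an end `z ∈ J` is already placed relative to every other end,
so are both ends of `w`: an end `c` of another chord lies below the left end of `w` iff `c ∉ J`
and `c < z`, and below the right end iff `c ∈ J` or `c < z`. Crossing chords have ends inside each
other's intervals, so this spreads from `v₀` along the edges of the connected graph: both
diagrams induce the same linear order, hence coincide up to rotation.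
-/

open Set Function

theorem lt_iff_of_mem_uIoo {α : Type*} [LinearOrder α] {x y z c : α} (hz : z ∈ uIoo x y)
    (hcx : c ≠ x) :
    x < c ↔ if x < y then c ∈ uIoo x y ∨ z < c else c ∉ uIoo x y ∧ z < c := by
  rcases lt_or_ge x y with h | h
  · simp only [h, if_true, uIoo_of_lt h, mem_Ioo] at hz ⊢
    grind
  · simp only [h.not_gt, if_false, uIoo_of_ge h, mem_Ioo] at hz ⊢
    grind

theorem lt_iff_notMem_uIoo {α : Type*} [LinearOrder α] {x y c : α} (hxc : x < c) (hcy : c ≠ y) :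
    y < c ↔ c ∉ uIoo x y := by
  rcases lt_or_ge x y with h | h
  · simp only [uIoo_of_lt h, mem_Ioo]; grind
  · simp only [uIoo_of_ge h, mem_Ioo]; grind

theorem Equiv.eq_of_lt_iff_lt {X α : Type*} [LinearOrder α] [WellFoundedLT α] {f g : X ≃ α}
    (h : ∀ a b, f a < f b ↔ g a < g b) : f = g := by
  have hmono : StrictMono (f.symm.trans g) := fun i j hij => by
    simpa [← h] using hij
  have hid : ⇑(f.symm.trans g) = id :=
    (hmono.range_inj strictMono_id).1 (by simp [EquivLike.range_eq_univ])
  ext a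
  simpa using (congrFun hid (f a)).symm

theorem SimpleGraph.Connected.forall_of_adj {V : Type*} {G : SimpleGraph V} (hG : G.Connected)
    {P : V → Prop} {v₀ : V} (h₀ : P v₀) (hadj : ∀ v w, G.Adj v w → P v → P w) (w : V) : P w := by
  obtain ⟨p⟩ := hG.preconnected v₀ w
  induction p with
  | nil => exact h₀
  | cons h _ ih => exact ih (hadj _ _ h h₀)

theorem Finset.card_filter_pair_eq_one_iff {α : Type*} [DecidableEq α] (P : α → Prop)
    [DecidablePred P] {a b : α} (h : a ≠ b) :
    (({a, b} : Finset α).filter P).card = 1 ↔ (P a ↔ ¬ P b) := by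
  by_cases ha : P a <;> by_cases hb : P b <;>
    simp [Finset.filter_insert, Finset.filter_singleton, ha, hb, h]

theorem cycBtw_iff_mem_uIoo_iff {m : ℕ} {i j k : Fin m} (hij : i ≠ j) (hki : k ≠ i)
    (hkj : k ≠ j) : cycBtw i k j ↔ (k ∈ uIoo i j ↔ i < j) := by
  have := Fin.val_ne_of_ne hki; have := Fin.val_ne_of_ne hkj
  unfold cycBtw
  rcases hij.lt_or_gt with h | h
  · simp [h, uIoo_of_lt h]
  · simp only [h.not_gt, if_false, uIoo_of_gt h, Set.mem_Ioo, iff_false, Fin.lt_def] at h ⊢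
    omega

theorem cycBtw_sub_right {m : ℕ} (i k j r : Fin m) :
    cycBtw (i - r) (k - r) (j - r) ↔ cycBtw i k j := by
  have hsub (a : Fin m) : ((a - r : Fin m) : ℕ) = if r ≤ a then (a : ℕ) - r else m + a - r := by
    split_ifs with h
    · exact Fin.coe_sub_iff_le.2 h
    · exact Fin.coe_sub_iff_lt.2 (not_le.1 h)
  have := i.isLt; have := k.isLt; have := j.isLt; have := r.isLt
  unfold cycBtw
  simp only [Fin.lt_def, hsub, Fin.le_def]
  split_ifs <;> omega

section ChordOrder

variable {V α β : Type*} [LinearOrder α] [LinearOrder β]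

def chordIoo (q : V × Bool → α) (w : V) : Set α := uIoo (q (w, true)) (q (w, false))

theorem cycBtw_iff_mem_chordIoo_iff {m : ℕ} {q : V × Bool → Fin m} (hq : Injective q)
    {w x : V} (hwx : w ≠ x) (e : Bool) :
    cycBtw (q (w, true)) (q (x, e)) (q (w, false)) ↔
      (q (x, e) ∈ chordIoo q w ↔ q (w, true) < q (w, false)) :=
  cycBtw_iff_mem_uIoo_iff (hq.ne (by simp)) (hq.ne (by simp [hwx.symm]))
    (hq.ne (by simp [hwx.symm]))

theorem lt_iff_of_mem_chordIoo {q : V × Bool → α} (hq : Injective q) {w : V} {z : α}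
    (hz : z ∈ chordIoo q w) (e : Bool) {c : V × Bool} (hc : c.1 ≠ w) :
    q (w, e) < q c ↔
      if q (w, e) < q (w, !e) then q c ∈ chordIoo q w ∨ z < q c
      else q c ∉ chordIoo q w ∧ z < q c := by
  have hcw : q c ≠ q (w, e) := hq.ne fun h => hc (congrArg Prod.fst h)
  cases e
  · rw [chordIoo, uIoo_comm] at hz ⊢
    exact lt_iff_of_mem_uIoo hz hcw
  · exact lt_iff_of_mem_uIoo hz hcw

theorem lt_iff_lt_comm {q₁ : V × Bool → α} {q₂ : V × Bool → β} (hq₁ : Injective q₁)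
    (hq₂ : Injective q₂) {a b : V × Bool} (h : q₁ a < q₁ b ↔ q₂ a < q₂ b) :
    q₁ b < q₁ a ↔ q₂ b < q₂ a := by
  rcases eq_or_ne a b with rfl | hab
  · simp
  · rw [← not_iff_not, not_lt, not_lt, (hq₁.ne hab).le_iff_lt, (hq₂.ne hab).le_iff_lt, h]

theorem lt_iff_lt_of_forall_le {q₁ : V × Bool → α} {q₂ : V × Bool → β} (hq₁ : Injective q₁)
    (hq₂ : Injective q₂) {v₀ : V} (hmin₁ : ∀ a, q₁ (v₀, true) ≤ q₁ a)
    (hmin₂ : ∀ a, q₂ (v₀, true) ≤ q₂ a)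
    (hnest : ∀ a : V × Bool, a.1 ≠ v₀ → (q₁ a ∈ chordIoo q₁ v₀ ↔ q₂ a ∈ chordIoo q₂ v₀))
    (e : Bool) (b : V × Bool) : q₁ (v₀, e) < q₁ b ↔ q₂ (v₀, e) < q₂ b := by
  cases e
  · by_cases hb : b.1 = v₀
    · obtain ⟨x, _ | _⟩ := b <;> simp only at hb <;> subst hb
      · simp
      · exact iff_of_false (hmin₁ _).not_gt (hmin₂ _).not_gt
    · have hhead : (v₀, true) ≠ b := fun h => hb (by rw [← h])
      have htail : b ≠ (v₀, false) := fun h => hb (by rw [h])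
      rw [lt_iff_notMem_uIoo ((hmin₁ b).lt_of_ne (hq₁.ne hhead)) (hq₁.ne htail),
        lt_iff_notMem_uIoo ((hmin₂ b).lt_of_ne (hq₂.ne hhead)) (hq₂.ne htail)]
      exact not_congr (hnest b hb)
  · rw [(hmin₁ b).lt_iff_ne, (hmin₂ b).lt_iff_ne, hq₁.ne_iff, hq₂.ne_iff]

theorem lt_iff_lt_of_mem_chordIoo {q₁ : V × Bool → α} {q₂ : V × Bool → β} (hq₁ : Injective q₁)
    (hq₂ : Injective q₂) {w : V}
    (horient : q₁ (w, true) < q₁ (w, false) ↔ q₂ (w, true) < q₂ (w, false))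
    (hnest : ∀ a : V × Bool, a.1 ≠ w → (q₁ a ∈ chordIoo q₁ w ↔ q₂ a ∈ chordIoo q₂ w))
    {z : V × Bool} (hzw : z.1 ≠ w) (hz : q₁ z ∈ chordIoo q₁ w)
    (hzlt : ∀ b, q₁ z < q₁ b ↔ q₂ z < q₂ b) (e : Bool) (b : V × Bool) :
    q₁ (w, e) < q₁ b ↔ q₂ (w, e) < q₂ b := by
  have horient' : q₁ (w, e) < q₁ (w, !e) ↔ q₂ (w, e) < q₂ (w, !e) := by
    cases e
    · exact lt_iff_lt_comm hq₁ hq₂ horient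
    · exact horient
  by_cases hb : b.1 = w
  · obtain ⟨_, e'⟩ := b
    subst hb
    obtain rfl | rfl : e' = e ∨ e' = !e := by cases e <;> cases e' <;> simp
    · simp
    · exact horient'
  · rw [lt_iff_of_mem_chordIoo hq₁ hz e hb,
      lt_iff_of_mem_chordIoo hq₂ ((hnest z hzw).1 hz) e hb]
    simp only [horient', hnest b hb, hzlt b]

theorem lt_iff_lt_of_chordIoo {G : SimpleGraph V} (hG : G.Connected) {q₁ : V × Bool → α}
    {q₂ : V × Bool → β} (hq₁ : Injective q₁) (hq₂ : Injective q₂) {v₀ : V}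
    (hmin₁ : ∀ a, q₁ (v₀, true) ≤ q₁ a) (hmin₂ : ∀ a, q₂ (v₀, true) ≤ q₂ a)
    (horient : ∀ w, q₁ (w, true) < q₁ (w, false) ↔ q₂ (w, true) < q₂ (w, false))
    (hnest : ∀ (w : V) (a : V × Bool), a.1 ≠ w → (q₁ a ∈ chordIoo q₁ w ↔ q₂ a ∈ chordIoo q₂ w))
    (hcross : ∀ v w, G.Adj v w → ∃ e, q₁ (v, e) ∈ chordIoo q₁ w) (a b : V × Bool) :
    q₁ a < q₁ b ↔ q₂ a < q₂ b := by
  refine hG.forall_of_adj (P := fun v => ∀ e b, q₁ (v, e) < q₁ b ↔ q₂ (v, e) < q₂ b)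
    (lt_iff_lt_of_forall_le hq₁ hq₂ hmin₁ hmin₂ (hnest v₀)) (fun v w hvw hv => ?_) a.1 a.2 b
  obtain ⟨e, he⟩ := hcross v w hvw
  exact lt_iff_lt_of_mem_chordIoo hq₁ hq₂ (horient w) (hnest w) hvw.ne he (hv e)

end ChordOrder

namespace OCD

variable {V : Type*} [Fintype V] [DecidableEq V] {G : SimpleGraph V}

section

variable (D : OCD G)

def endOf (i : Fin (2 * Fintype.card V)) : V × Bool := (D.word i, D.isHead i)

theorem card_filter_endOf_eq_one (a : V × Bool) :
    (Finset.univ.filter fun i => D.endOf i = a).card = 1 := by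
  obtain ⟨v, _ | _⟩ := a
  · have hsplit := Finset.card_filter_add_card_filter_not
      (s := Finset.univ.filter fun i => D.word i = v) (fun i => D.isHead i = true)
    simp only [Finset.filter_filter, D.occ_two, D.head_one, Bool.not_eq_true] at hsplit
    simpa [endOf, Prod.ext_iff] using (by omega : _ = 1)
  · simpa [endOf, Prod.ext_iff] using D.head_one v

theorem endOf_bijective : Bijective D.endOf :=
  (bijective_iff_existsUnique _).2 fun a => by
    simpa using Finset.card_eq_one_iff_existsUnique.1 (D.card_filter_endOf_eq_one a)

noncomputable def pos : V × Bool ≃ Fin (2 * Fintype.card V) :=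
  (Equiv.ofBijective _ D.endOf_bijective).symm

@[simp] theorem endOf_pos (a : V × Bool) : D.endOf (D.pos a) = a :=
  Equiv.apply_symm_apply (Equiv.ofBijective _ D.endOf_bijective) a

@[simp] theorem pos_endOf (i : Fin (2 * Fintype.card V)) : D.pos (D.endOf i) = i :=
  Equiv.symm_apply_apply (Equiv.ofBijective _ D.endOf_bijective) i

@[simp] theorem word_pos (a : V × Bool) : D.word (D.pos a) = a.1 :=
  congrArg Prod.fst (D.endOf_pos a)

@[simp] theorem isHead_pos (a : V × Bool) : D.isHead (D.pos a) = a.2 :=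
  congrArg Prod.snd (D.endOf_pos a)

theorem word_eq_iff {i : Fin (2 * Fintype.card V)} {x : V} :
    D.word i = x ↔ i = D.pos (x, true) ∨ i = D.pos (x, false) := by
  rw [← D.pos_endOf i, D.pos.injective.eq_iff, D.pos.injective.eq_iff]
  cases h : D.isHead i <;> simp [endOf, h]

theorem adj_iff_mem_chordIoo {u x : V} (hux : u ≠ x) :
    G.Adj u x ↔ (D.pos (x, true) ∈ chordIoo D.pos u ↔ D.pos (x, false) ∉ chordIoo D.pos u) := by
  have hfilter (i j : Fin (2 * Fintype.card V)) :
      (Finset.univ.filter fun k => D.word k = x ∧ i < k ∧ k < j) =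
        ({D.pos (x, true), D.pos (x, false)} : Finset _).filter (· ∈ Ioo i j) := by
    ext k
    simp [D.word_eq_iff, or_and_right]
  have hne (v : V) : D.pos (v, true) ≠ D.pos (v, false) := D.pos.injective.ne (by simp)
  rw [D.adj_iff u x hux]
  simp only [hfilter, Finset.card_filter_pair_eq_one_iff _ (hne x)]
  simp only [D.word_eq_iff]
  constructor
  · rintro ⟨i, j, hij, hi | hi, hj | hj, h⟩ <;> subst hi hj
    · exact absurd hij (lt_irrefl _)
    · rwa [chordIoo, uIoo_of_lt hij]
    · rwa [chordIoo, uIoo_comm, uIoo_of_lt hij]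
    · exact absurd hij (lt_irrefl _)
  · intro h
    rcases (hne u).lt_or_gt with hlt | hlt
    · exact ⟨_, _, hlt, .inl rfl, .inr rfl, by rwa [chordIoo, uIoo_of_lt hlt] at h⟩
    · exact ⟨_, _, hlt, .inr rfl, .inl rfl, by rwa [chordIoo, uIoo_of_gt hlt] at h⟩

theorem adj_iff_cycBtw {u x : V} (hux : u ≠ x) :
    G.Adj u x ↔ (cycBtw (D.pos (u, true)) (D.pos (x, true)) (D.pos (u, false)) ↔
      ¬ cycBtw (D.pos (u, true)) (D.pos (x, false)) (D.pos (u, false))) := by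
  rw [D.adj_iff_mem_chordIoo hux, cycBtw_iff_mem_chordIoo_iff D.pos.injective hux,
    cycBtw_iff_mem_chordIoo_iff D.pos.injective hux]
  tauto

end

theorem Realizes.zero_iff {D : OCD G} {β : V → V → ZMod 2} (h : D.Realizes β) {u x : V}
    (hux : u ≠ x) : β u x = 0 ↔ cycBtw (D.pos (u, true)) (D.pos (x, true)) (D.pos (u, false)) :=
  h u x hux _ _ _ (by simp) (by simp) (by simp) (by simp) (by simp) (by simp)

variable [NeZero (2 * Fintype.card V)] (D : OCD G) (x₀ : V × Bool)

noncomputable def relPos : V × Bool ≃ Fin (2 * Fintype.card V) :=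
  D.pos.trans (Equiv.subRight (D.pos x₀))

theorem relPos_apply (a : V × Bool) : D.relPos x₀ a = D.pos a - D.pos x₀ := rfl

@[simp] theorem relPos_self : D.relPos x₀ x₀ = 0 := sub_self _

theorem cycBtw_relPos (a b c : V × Bool) :
    cycBtw (D.relPos x₀ a) (D.relPos x₀ b) (D.relPos x₀ c) ↔
      cycBtw (D.pos a) (D.pos b) (D.pos c) :=
  cycBtw_sub_right ..

theorem adj_iff_mem_chordIoo_relPos {u x : V} (hux : u ≠ x) :
    G.Adj u x ↔ (D.relPos x₀ (x, true) ∈ chordIoo (D.relPos x₀) u ↔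
      D.relPos x₀ (x, false) ∉ chordIoo (D.relPos x₀) u) := by
  rw [D.adj_iff_cycBtw hux, ← cycBtw_relPos, ← cycBtw_relPos,
    cycBtw_iff_mem_chordIoo_iff (D.relPos x₀).injective hux,
    cycBtw_iff_mem_chordIoo_iff (D.relPos x₀).injective hux]
  tauto

variable {D} {β : V → V → ZMod 2} {v₀ : V}

theorem Realizes.relPos_lt_iff (h : D.Realizes β) (w : V) :
    D.relPos (v₀, true) (w, true) < D.relPos (v₀, true) (w, false) ↔ w = v₀ ∨ β w v₀ ≠ 0 := by
  rcases eq_or_ne w v₀ with rfl | hw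
  · have : D.relPos (w, true) (w, false) ≠ 0 := by
      rw [← D.relPos_self (w, true)]
      exact (D.relPos _).injective.ne (by simp)
    simpa [Fin.pos_iff_ne_zero] using this
  · have hbase : D.relPos (v₀, true) (v₀, true) ∉ chordIoo (D.relPos (v₀, true)) w := by
      simp [chordIoo, uIoo]
    rw [ne_eq, h.zero_iff hw, ← cycBtw_relPos _ (v₀, true),
      cycBtw_iff_mem_chordIoo_iff (D.relPos _).injective hw]
    tauto

theorem Realizes.mem_chordIoo_relPos_iff (h : D.Realizes β) {w x : V} (hwx : w ≠ x) :
    D.relPos (v₀, true) (x, true) ∈ chordIoo (D.relPos (v₀, true)) w ↔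
      (β w x = 0 ↔ w = v₀ ∨ β w v₀ ≠ 0) := by
  rw [← h.relPos_lt_iff, h.zero_iff hwx, ← cycBtw_relPos _ (v₀, true),
    cycBtw_iff_mem_chordIoo_iff (D.relPos _).injective hwx]
  tauto

theorem Realizes.relPos_lt_iff_lt {D₁ D₂ : OCD G} (hG : G.Connected) (h₁ : D₁.Realizes β)
    (h₂ : D₂.Realizes β) (v₀ : V) (a b : V × Bool) :
    D₁.relPos (v₀, true) a < D₁.relPos (v₀, true) b ↔
      D₂.relPos (v₀, true) a < D₂.relPos (v₀, true) b := by
  have htail (D : OCD G) {w x : V} (hwx : w ≠ x) :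
      D.relPos (v₀, true) (x, false) ∈ chordIoo (D.relPos (v₀, true)) w ↔
        (D.relPos (v₀, true) (x, true) ∈ chordIoo (D.relPos (v₀, true)) w ↔ ¬ G.Adj w x) := by
    rw [D.adj_iff_mem_chordIoo_relPos _ hwx]
    tauto
  refine lt_iff_lt_of_chordIoo hG (D₁.relPos _).injective (D₂.relPos _).injective (v₀ := v₀)
    (fun a => by simp) (fun a => by simp) (fun w => by rw [h₁.relPos_lt_iff, h₂.relPos_lt_iff])
    (fun w ⟨x, e⟩ hxw => ?_) (fun v w hvw => ?_) a b
  · cases e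
    · rw [htail D₁ (Ne.symm hxw), htail D₂ (Ne.symm hxw), h₁.mem_chordIoo_relPos_iff (Ne.symm hxw),
        h₂.mem_chordIoo_relPos_iff (Ne.symm hxw)]
    · rw [h₁.mem_chordIoo_relPos_iff (Ne.symm hxw), h₂.mem_chordIoo_relPos_iff (Ne.symm hxw)]
  · have hcross := (D₁.adj_iff_mem_chordIoo_relPos (v₀, true) hvw.ne.symm).1 hvw.symm
    by_cases hhead : D₁.relPos (v₀, true) (v, true) ∈ chordIoo (D₁.relPos (v₀, true)) w
    · exact ⟨true, hhead⟩
    · exact ⟨false, by tauto⟩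

theorem equiv_of_relPos_eq {D₁ D₂ : OCD G} (h : D₁.relPos x₀ = D₂.relPos x₀) : D₁.Equiv D₂ := by
  refine ⟨D₂.pos x₀ - D₁.pos x₀, fun i => ?_⟩
  have hi : D₂.pos (D₁.endOf i) = i + (D₂.pos x₀ - D₁.pos x₀) := by
    have := congrArg (· (D₁.endOf i)) h
    simp only [relPos_apply, pos_endOf] at this
    rw [← sub_add_cancel (D₂.pos (D₁.endOf i)) (D₂.pos x₀), ← this]
    abel
  simp [← hi, endOf]

end OCD

theorem naji_unique_diagram_general {V : Type*} [Fintype V] [DecidableEq V]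
    (G : SimpleGraph V) (hconn : G.Connected)
    (β : V → V → ZMod 2) (D₁ D₂ : OCD G)
    (h₁ : D₁.Realizes β) (h₂ : D₂.Realizes β) :
    D₁.Equiv D₂ := by
  obtain ⟨v₀⟩ := hconn.nonempty
  have : NeZero (2 * Fintype.card V) := ⟨mul_ne_zero two_ne_zero (Fintype.card_pos_iff.2 ⟨v₀⟩).ne'⟩
  exact OCD.equiv_of_relPos_eq (v₀, true)
    (Equiv.eq_of_lt_iff_lt (OCD.Realizes.relPos_lt_iff_lt hconn h₁ h₂ v₀))

/-- For a connected graph, a chordal Naji solution is realized by a unique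
oriented chord diagram up to equivalence. -/
theorem naji_unique_diagram {V : Type*} [Fintype V] [DecidableEq V]
    (G : SimpleGraph V) (hconn : G.Connected) (hcard : 2 ≤ Fintype.card V)
    (β : V → V → ZMod 2) (D₁ D₂ : OCD G)
    (h₁ : D₁.Realizes β) (h₂ : D₂.Realizes β) :
    D₁.Equiv D₂ :=
  naji_unique_diagram_general G hconn β D₁ D₂ h₁ h₂
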